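/- arXiv:2308.14285 — 3 statements merged into one kernel-verified Lean document; each statement's English description precedes it below -/
import Mathlib

section
/- Let R be a commutative Noetherian ring, M a finitely generated R-module, N a proper submodule of M, and p a maximal element of Ass_R(M/N). Then (N :_M p) is the unique maximal p-prime extension of N in M: every submodule K of M with N a p-prime submodule of K satisfies K ⊆ (N :_M p). -/
variable {R : Type*} [CommRing R] {M : Type*} [AddCommGroup M] [Module R M]

/-- The colon submodule `(N :_M I) = {x ∈ M | I • x ⊆ N}`. -/
def colonSubmodule (N : Submodule R M) (I : Ideal R) : Submodule R M where
  carrier := {x | ∀ a ∈ I, a • x ∈ N}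
  add_mem' := fun hx hy a ha => by simpa [smul_add] using N.add_mem (hx a ha) (hy a ha)
  zero_mem' := fun a _ => by simp
  smul_mem' := fun c x hx a ha => by
    rw [smul_comm]
    exact N.smul_mem c (hx a ha)

/-- `K` is a `p`-prime extension of `N`, i.e. `N` is a `p`-prime submodule of `K`. -/
def IsPrimeExt (p : Ideal R) (N K : Submodule R M) : Prop :=
  N < K ∧ N.colon K = p ∧ ∀ a : R, ∀ x ∈ K, a • x ∈ N → x ∈ N ∨ a ∈ p

/-- The associated primes of `T / N` for submodules `N ≤ T ≤ M`. -/
def assOf (R : Type*) {M : Type*} [CommRing R] [AddCommGroup M] [Module R M]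
    (N T : Submodule R M) : Set (Ideal R) :=
  associatedPrimes R ↥(T.map N.mkQ)

/-- `K` is a maximal `p`-prime extension of `N` inside `T`. -/
def IsMaximalPrimeExtIn (T : Submodule R M) (p : Ideal R) (N K : Submodule R M) : Prop :=
  K ≤ T ∧ IsPrimeExt p N K ∧ ∀ L ≤ T, IsPrimeExt p N L → ¬ K < L

/-- `K` is a regular `p`-prime extension of `N` inside `T`: a maximal `p`-prime
extension where `p` is a maximal element of `Ass (T/N)`. -/
def IsRegularPrimeExtIn (T : Submodule R M) (p : Ideal R) (N K : Submodule R M) : Prop :=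
  IsMaximalPrimeExtIn T p N K ∧ Maximal (· ∈ assOf R N T) p

/-- A regular prime extension (RPE) filtration inside `T` with primes `p i`. -/
def IsRPEFiltrationIn (T : Submodule R M) {n : ℕ}
    (F : Fin (n + 1) → Submodule R M) (p : Fin n → Ideal R) : Prop :=
  ∀ i : Fin n, IsRegularPrimeExtIn T (p i) (F i.castSucc) (F i.succ)

/-- The generalized prime ideal factorization of `N` in `T` is given by the multiset `s`:
there is an RPE filtration of `T` over `N` whose multiset of primes is `s`. -/
def HasGPIF (N T : Submodule R M) (s : Multiset (Ideal R)) : Prop :=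
  ∃ (n : ℕ) (F : Fin (n + 1) → Submodule R M) (p : Fin n → Ideal R),
    F 0 = N ∧ F (Fin.last n) = T ∧ IsRPEFiltrationIn T F p ∧ (List.ofFn p : Multiset (Ideal R)) = s

/-! `p = (N :_R x)` for some `x ∈ M` by Noetherianity, so `x` witnesses `(N :_R (N :_M p)) = p`.
Conversely, for `z ∈ (N :_M p) \ N` the ideal `(N :_R z) ⊇ p` lies in an associated prime of
`M/N`, which by maximality of `p` is `p` itself; this is the primality of `N` in `(N :_M p)`.
Maximality is formal: `K ≤ (N :_M I)` iff `I ≤ (N :_R K)`. -/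

theorem le_colonSubmodule_iff {N K : Submodule R M} {I : Ideal R} :
    K ≤ colonSubmodule N I ↔ I ≤ N.colon (K : Set M) :=
  ⟨fun h _ ha => Submodule.mem_colon.mpr fun _ hz => h hz _ ha,
    fun h z hz _ ha => Submodule.mem_colon.mp (h ha) z hz⟩

theorem mem_colonSubmodule_iff {N : Submodule R M} {I : Ideal R} {z : M} :
    z ∈ colonSubmodule N I ↔ I ≤ N.colon {z} :=
  ⟨fun h a ha => Submodule.mem_colon_singleton.mpr (h a ha),
    fun h _ ha => Submodule.mem_colon_singleton.mp (h ha)⟩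

theorem le_colonSubmodule (N : Submodule R M) (I : Ideal R) : N ≤ colonSubmodule N I :=
  fun _ hz a _ => N.smul_mem a hz

theorem IsPrimeExt.le_colonSubmodule {p : Ideal R} {N K : Submodule R M}
    (h : IsPrimeExt p N K) : K ≤ colonSubmodule N p :=
  le_colonSubmodule_iff.mpr h.2.1.ge

theorem Submodule.colon_bot_singleton_mk (N : Submodule R M) (x : M) :
    (⊥ : Submodule R (M ⧸ N)).colon {Submodule.Quotient.mk x} = N.colon {x} := by
  ext a
  rw [Submodule.mem_colon_singleton, Submodule.mem_colon_singleton, Submodule.mem_bot,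
    ← Submodule.Quotient.mk_smul, Submodule.Quotient.mk_eq_zero]

section Noetherian

variable [IsNoetherianRing R] {N : Submodule R M} {p : Ideal R}

theorem exists_colon_singleton_eq_of_mem_associatedPrimes
    (hp : p ∈ associatedPrimes R (M ⧸ N)) : ∃ x : M, N.colon {x} = p := by
  obtain ⟨-, y, hy⟩ := isAssociatedPrime_iff.mp hp
  obtain ⟨x, rfl⟩ := Submodule.Quotient.mk_surjective N y
  exact ⟨x, (N.colon_bot_singleton_mk x ▸ hy).symm⟩

theorem exists_mem_associatedPrimes_colon_singleton_le {z : M} (hz : z ∉ N) :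
    ∃ q ∈ associatedPrimes R (M ⧸ N), N.colon {z} ≤ q := by
  have hz' : (Submodule.Quotient.mk z : M ⧸ N) ≠ 0 :=
    fun h => hz ((Submodule.Quotient.mk_eq_zero N).mp h)
  simpa only [AssociatedPrimes.mem_iff, Submodule.colon_bot_singleton_mk] using
    exists_le_isAssociatedPrime_of_isNoetherianRing R _ hz'

theorem colon_colonSubmodule_of_mem_associatedPrimes (hp : p ∈ associatedPrimes R (M ⧸ N)) :
    N.colon (colonSubmodule N p : Set M) = p := by
  obtain ⟨x, hx⟩ := exists_colon_singleton_eq_of_mem_associatedPrimes hp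
  refine le_antisymm ?_ (le_colonSubmodule_iff.mp le_rfl)
  calc N.colon (colonSubmodule N p : Set M)
      ≤ N.colon {x} := Submodule.colon_mono le_rfl
          (Set.singleton_subset_iff.mpr (mem_colonSubmodule_iff.mpr hx.ge))
    _ = p := hx

theorem colon_singleton_eq_of_mem_colonSubmodule
    (hp : Maximal (· ∈ associatedPrimes R (M ⧸ N)) p) {z : M}
    (hz : z ∈ colonSubmodule N p) (hzN : z ∉ N) : N.colon {z} = p := by
  obtain ⟨q, hq, hzq⟩ := exists_mem_associatedPrimes_colon_singleton_le hzN
  have hpz : p ≤ N.colon {z} := mem_colonSubmodule_iff.mp hz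
  exact le_antisymm (hzq.trans (hp.2 hq (hpz.trans hzq))) hpz

theorem isPrimeExt_colonSubmodule (hp : Maximal (· ∈ associatedPrimes R (M ⧸ N)) p) :
    IsPrimeExt p N (colonSubmodule N p) := by
  have hcolon := colon_colonSubmodule_of_mem_associatedPrimes hp.prop
  have hne : N ≠ colonSubmodule N p := by
    intro h
    apply hp.prop.isPrime.ne_top
    rw [← hcolon, ← h]
    exact (N.colon_eq_top_iff_subset _).mpr subset_rfl
  refine ⟨(le_colonSubmodule N p).lt_of_ne hne, hcolon, fun a z hz haz => ?_⟩
  by_cases hzN : z ∈ N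
  · exact .inl hzN
  · exact .inr (colon_singleton_eq_of_mem_colonSubmodule hp hz hzN ▸
      Submodule.mem_colon_singleton.mpr haz)

end Noetherian

theorem colon_is_unique_maximal_prime_ext_general {R : Type*} [CommRing R] [IsNoetherianRing R]
    {M : Type*} [AddCommGroup M] [Module R M]
    (N : Submodule R M) (p : Ideal R)
    (hp : Maximal (· ∈ associatedPrimes R (M ⧸ N)) p) :
    IsPrimeExt p N (colonSubmodule N p) ∧
      ∀ K : Submodule R M, IsPrimeExt p N K → K ≤ colonSubmodule N p :=
  ⟨isPrimeExt_colonSubmodule hp, fun _ hK => hK.le_colonSubmodule⟩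

/-- If `p` is a maximal element of `Ass (M/N)`, then `(N :_M p)` is the unique
maximal `p`-prime extension of `N` in `M`: it is a `p`-prime extension and any
`p`-prime extension `K` of `N` in `M` satisfies `K ≤ (N :_M p)`. -/
theorem colon_is_unique_maximal_prime_ext {R : Type*} [CommRing R] [IsNoetherianRing R]
    {M : Type*} [AddCommGroup M] [Module R M] [Module.Finite R M]
    (N : Submodule R M) (hN : N ≠ ⊤) (p : Ideal R)
    (hp : Maximal (· ∈ associatedPrimes R (M ⧸ N)) p) :
    IsPrimeExt p N (colonSubmodule N p) ∧
      ∀ K : Submodule R M, IsPrimeExt p N K → K ≤ colonSubmodule N p :=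
  colon_is_unique_maximal_prime_ext_general N p hp
end

section
/- Let R be a commutative Noetherian ring, p₁, …, pₙ distinct prime ideals, r₁, …, rₙ positive integers. If there exist a finitely generated R-module M and a proper submodule N with generalized prime ideal factorization P_M(N) = p₁^{r₁}⋯pₙ^{rₙ}, then p_i^{r_i} ≠ p_i^{r_i − 1} for every 1 ≤ i ≤ n. -/
variable {R : Type*} [CommRing R] {M : Type*} [AddCommGroup M] [Module R M]

/-!
Let `P = pᵢ`, `m = rᵢ - 1` and suppose `P ^ (m + 1) = P ^ m`. By Nakayama some `e ∈ P` acts as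
the identity on `P ^ m`. Hence every prime contained in `P` equals `P`, and no `x ∈ P ^ m • M`
has annihilator exactly `P` modulo a submodule, since `x = e • x` would lie in it.

Take a step `F k ⊂ F (k + 1)` of the filtration with prime `P` and `u ∈ F (k + 1) \ F k`; its
annihilator modulo `F k` is `P`. Walk down to `F 0`, keeping an element whose annihilator modulo
the current step is `P`: across a step with prime `P`, maximality of that prime extension gives
`b ∈ P` with `b • x` outside the lower step (otherwise adjoining `x` would give a larger
`P`-prime extension); across any other step, multiply by an element of its prime outside `P`.
Each `P`-step costs a factor of `P`, so fewer than `m` of them lie below `F k`. Thus `P` occurs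
at most `m` times in the filtration, whereas the factorization needs `m + 1` occurrences.
-/

theorem List.count_take_ofFn_succ {α : Type*} [DecidableEq α] {n : ℕ} (f : Fin n → α)
    (i : Fin n) (a : α) :
    ((List.ofFn f).take (i + 1)).count a =
      ((List.ofFn f).take i).count a + if f i = a then 1 else 0 := by
  simp [List.take_add_one, List.count_singleton]

namespace Ideal

variable [IsNoetherianRing R] {P : Ideal R} {m : ℕ}

theorem exists_mem_forall_mul_eq_of_pow_succ_eq (h : P ^ (m + 1) = P ^ m) :
    ∃ e ∈ P, ∀ c ∈ P ^ m, e * c = c :=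
  Submodule.exists_mem_and_smul_eq_self_of_fg_of_le_smul P (P ^ m) (IsNoetherian.noetherian _)
    (by rw [smul_eq_mul, ← pow_succ', h])

theorem eq_of_le_of_pow_succ_eq {Q : Ideal R} [hQ : Q.IsPrime] (hP : P ≠ ⊤) (hQP : Q ≤ P)
    (h : P ^ (m + 1) = P ^ m) : Q = P := by
  obtain ⟨e, heP, he⟩ := exists_mem_forall_mul_eq_of_pow_succ_eq h
  have hunit : 1 - e ∉ Q := fun h1 => hP <| (eq_top_iff_one P).2 <| by
    simpa using P.add_mem (hQP h1) heP
  have hPm : P ^ m ≤ Q := fun c hc =>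
    (hQ.mem_or_mem (by rw [sub_mul, one_mul, he c hc, sub_self]; exact Q.zero_mem)).resolve_left
      hunit
  exact le_antisymm hQP (hQ.le_of_pow_le hPm)

end Ideal

theorem Submodule.colon_singleton_ne_of_pow_succ_eq [IsNoetherianRing R] {P : Ideal R} {m : ℕ}
    (hP : P ≠ ⊤) (h : P ^ (m + 1) = P ^ m)
    {N T : Submodule R M} {x : M} (hx : x ∈ P ^ m • T) : N.colon {x} ≠ P := by
  obtain ⟨e, heP, he⟩ := Ideal.exists_mem_forall_mul_eq_of_pow_succ_eq h
  have hex : e • x = x := Submodule.smul_induction_on hx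
    (fun c hc y _ => by rw [smul_smul, he c hc]) (fun y z hy hz => by rw [smul_add, hy, hz])
  intro hcol
  refine hP ((Ideal.eq_top_iff_one P).2 ?_)
  rw [← hcol, Submodule.mem_colon_singleton, one_smul, ← hex, ← Submodule.mem_colon_singleton,
    hcol]
  exact heP

namespace IsPrimeExt

variable {p : Ideal R} {N K : Submodule R M}

theorem smul_mem (h : IsPrimeExt p N K) {a : R} (ha : a ∈ p) {x : M} (hx : x ∈ K) :
    a • x ∈ N :=
  Submodule.mem_colon.1 (h.2.1 ▸ ha) x hx

theorem isPrime (h : IsPrimeExt p N K) : p.IsPrime := by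
  obtain ⟨x, hxK, hxN⟩ := SetLike.exists_of_lt h.1
  refine ⟨fun hp => hxN ?_, fun {a b} hab => or_iff_not_imp_left.2 fun ha => ?_⟩
  · simpa using h.smul_mem (hp ▸ Submodule.mem_top : (1 : R) ∈ p) hxK
  rw [← h.2.1, Submodule.mem_colon]
  intro y hy
  refine (h.2.2 a _ (K.smul_mem b hy) ?_).resolve_right ha
  rw [smul_smul]
  exact h.smul_mem hab hy

theorem colon_singleton_eq (h : IsPrimeExt p N K) {x : M} (hxK : x ∈ K) (hxN : x ∉ N) :
    N.colon {x} = p := by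
  ext a
  rw [Submodule.mem_colon_singleton]
  exact ⟨fun hax => (h.2.2 a x hxK hax).resolve_left hxN, fun ha => h.smul_mem ha hxK⟩

theorem colon_singleton_smul_eq {P : Ideal R} [hP : P.IsPrime] (h : IsPrimeExt p N K) {s : R}
    (hsp : s ∈ p) (hsP : s ∉ P) {x : M} (hx : K.colon {x} = P) : N.colon {s • x} = P := by
  ext a
  rw [Submodule.mem_colon_singleton, smul_smul]
  refine ⟨fun hasx => ?_, fun ha => ?_⟩
  · have has : a * s ∈ P := hx ▸ Submodule.mem_colon_singleton.2 (h.1.le hasx)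
    exact (hP.mem_or_mem has).resolve_right hsP
  · rw [mul_comm, mul_smul]
    exact h.smul_mem hsp (Submodule.mem_colon_singleton.1 (hx ▸ ha))

theorem sup_span_singleton (h : IsPrimeExt p N K) {v : M} (hpv : ∀ a ∈ p, a • v ∈ N)
    (hv : K.colon {v} ≤ p) : IsPrimeExt p N (K ⊔ R ∙ v) := by
  have hp := h.isPrime
  refine ⟨h.1.trans_le le_sup_left, le_antisymm ?_ ?_, fun a x hx hax => ?_⟩
  · exact h.2.1 ▸ Submodule.colon_mono le_rfl (SetLike.coe_subset_coe.2 le_sup_left)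
  · intro a ha
    rw [Submodule.mem_colon]
    intro x hx
    obtain ⟨y, hy, z, hz, rfl⟩ := Submodule.mem_sup.1 hx
    obtain ⟨c, rfl⟩ := Submodule.mem_span_singleton.1 hz
    rw [smul_add, smul_comm]
    exact N.add_mem (h.smul_mem ha hy) (N.smul_mem c (hpv a ha))
  by_cases ha : a ∈ p
  · exact Or.inr ha
  left
  obtain ⟨y, hy, z, hz, rfl⟩ := Submodule.mem_sup.1 hx
  obtain ⟨c, rfl⟩ := Submodule.mem_span_singleton.1 hz
  rw [smul_add] at hax
  have hacv : (a * c) • v ∈ K := by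
    rw [mul_smul, ← add_sub_cancel_left (a • y) (a • c • v)]
    exact K.sub_mem (h.1.le hax) (K.smul_mem a hy)
  have hcv : c • v ∈ N :=
    hpv c ((hp.mem_or_mem (hv (Submodule.mem_colon_singleton.2 hacv))).resolve_left ha)
  have hay : a • y ∈ N := by
    rw [← add_sub_cancel_right (a • y) (a • c • v)]
    exact N.sub_mem hax (N.smul_mem a hcv)
  exact N.add_mem ((h.2.2 a y hy hay).resolve_right ha) hcv

end IsPrimeExt

namespace IsMaximalPrimeExtIn

variable {T : Submodule R M} {p : Ideal R} {N K : Submodule R M}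

theorem exists_smul_notMem (h : IsMaximalPrimeExtIn T p N K) {v : M} (hvT : v ∈ T)
    (hv : K.colon {v} ≤ p) : ∃ a ∈ p, a • v ∉ N := by
  obtain ⟨hKT, hext, hmax⟩ := h
  by_contra! hpv
  have hvK : v ∉ K := fun hvK => hext.isPrime.ne_top <| (Ideal.eq_top_iff_one p).2 <|
    hv (Submodule.mem_colon_singleton.2 (by simpa using hvK))
  refine hmax _ (sup_le hKT ((Submodule.span_singleton_le_iff_mem v T).2 hvT))
    (hext.sup_span_singleton hpv hv) (left_lt_sup.2 ?_)
  rwa [Submodule.span_singleton_le_iff_mem]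

theorem exists_colon_singleton_smul_eq (h : IsMaximalPrimeExtIn T p N K) {x : M} (hxT : x ∈ T)
    (hx : K.colon {x} = p) : ∃ b ∈ p, N.colon {b • x} = p := by
  obtain ⟨b, hb, hbx⟩ := h.exists_smul_notMem hxT hx.le
  exact ⟨b, hb, h.2.1.colon_singleton_eq (Submodule.mem_colon_singleton.1 (hx ▸ hb)) hbx⟩

end IsMaximalPrimeExtIn

def IsMaximalPrimeExtFiltrationIn (T : Submodule R M) {n : ℕ}
    (F : Fin (n + 1) → Submodule R M) (q : Fin n → Ideal R) : Prop :=
  ∀ i : Fin n, IsMaximalPrimeExtIn T (q i) (F i.castSucc) (F i.succ)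

theorem IsRPEFiltrationIn.isMaximalPrimeExtFiltrationIn {T : Submodule R M} {n : ℕ}
    {F : Fin (n + 1) → Submodule R M} {q : Fin n → Ideal R} (h : IsRPEFiltrationIn T F q) :
    IsMaximalPrimeExtFiltrationIn T F q :=
  fun i => (h i).1

namespace IsMaximalPrimeExtFiltrationIn

variable {T : Submodule R M} {n : ℕ} {F : Fin (n + 1) → Submodule R M} {q : Fin n → Ideal R}
  [DecidableEq (Ideal R)]

theorem exists_mem_pow_smul_colon_singleton_eq (hF : IsMaximalPrimeExtFiltrationIn T F q)
    {P : Ideal R} [P.IsPrime] (hmin : ∀ i, q i ≤ P → q i = P) (j : Fin (n + 1))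
    {e : ℕ} {x : M} (hx : x ∈ P ^ e • T) (hxj : (F j).colon {x} = P) :
    ∃ y ∈ P ^ (e + ((List.ofFn q).take j).count P) • T, (F 0).colon {y} = P := by
  induction j using Fin.induction generalizing e x with
  | zero => exact ⟨x, by simpa using hx, hxj⟩
  | succ i ih =>
    rw [Fin.val_succ, List.count_take_ofFn_succ]
    by_cases hi : q i = P
    · subst hi
      obtain ⟨b, hb, hbx⟩ :=
        (hF i).exists_colon_singleton_smul_eq (Submodule.smul_le_right hx) hxj
      have hbx' : b • x ∈ q i ^ (e + 1) • T := by
        rw [pow_succ', Submodule.mul_smul]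
        exact Submodule.smul_mem_smul hb hx
      simpa [add_assoc, add_comm 1] using ih hbx' hbx
    · obtain ⟨s, hsq, hsP⟩ := Set.not_subset.1 (mt (hmin i) hi)
      simpa [hi] using ih (Submodule.smul_of_tower_mem _ s hx)
        ((hF i).2.1.colon_singleton_smul_eq hsq hsP hxj)

theorem count_ofFn_le_of_pow_succ_eq [IsNoetherianRing R]
    (hF : IsMaximalPrimeExtFiltrationIn T F q)
    {P : Ideal R} {m : ℕ} (h : P ^ (m + 1) = P ^ m) : (List.ofFn q).count P ≤ m := by
  by_cases hPq : P ∈ List.ofFn q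
  swap
  · simp [List.count_eq_zero.2 hPq]
  obtain ⟨k, rfl⟩ := List.mem_ofFn.1 hPq
  have := (hF k).2.1.isPrime
  have hmin : ∀ i, q i ≤ q k → q i = q k := fun i hi =>
    haveI := (hF i).2.1.isPrime
    Ideal.eq_of_le_of_pow_succ_eq Ideal.IsPrime.ne_top' hi h
  suffices ∀ j : Fin (n + 1), ((List.ofFn q).take j).count (q k) ≤ m by
    simpa [List.take_of_length_le] using this (Fin.last n)
  intro j
  induction j using Fin.induction with
  | zero => simp
  | succ i ih =>
    rw [Fin.val_succ, List.count_take_ofFn_succ]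
    split_ifs with hi
    · obtain ⟨u, hu, hu'⟩ := SetLike.exists_of_lt (hF i).2.1.1
      obtain ⟨y, hy, hcol⟩ := hF.exists_mem_pow_smul_colon_singleton_eq hmin i.castSucc
        (e := 0) (by simpa using (hF i).1 hu) (hi ▸ (hF i).2.1.colon_singleton_eq hu hu')
      by_contra! hm
      exact Submodule.colon_singleton_ne_of_pow_succ_eq Ideal.IsPrime.ne_top' h
        (Submodule.smul_mono_left (Ideal.pow_le_pow_right (by simpa using Nat.le_of_lt_succ hm))
          hy) hcol
    · simpa using ih

end IsMaximalPrimeExtFiltrationIn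

theorem pow_ne_pow_pred_of_gpif_prod_general {R : Type*} [CommRing R] [IsNoetherianRing R]
    {M : Type*} [AddCommGroup M] [Module R M]
    {n : ℕ} (p : Fin n → Ideal R)
    (r : Fin n → ℕ) (hr : ∀ i, 0 < r i)
    (N : Submodule R M)
    (h : HasGPIF N ⊤ (∑ i, Multiset.replicate (r i) (p i))) :
    ∀ i, p i ^ r i ≠ p i ^ (r i - 1) := by
  classical
  intro i hpow
  obtain ⟨_, F, q, -, -, hF, hq⟩ := h
  have hle : r i ≤ (List.ofFn q).count (p i) := by
    rw [← Multiset.coe_count, hq]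
    calc r i = (Multiset.replicate (r i) (p i)).count (p i) :=
          (Multiset.count_replicate_self _ _).symm
      _ ≤ _ := Multiset.count_le_of_le _ (Multiset.le_sum_of_mem (by simp))
  have hcount : (List.ofFn q).count (p i) ≤ r i - 1 :=
    hF.isMaximalPrimeExtFiltrationIn.count_ofFn_le_of_pow_succ_eq
      (by rwa [Nat.sub_add_cancel (hr i)])
  have := hr i
  omega

/-- If `p₁^{r₁} ⋯ pₙ^{rₙ}` is the generalized prime ideal factorization of some proper
submodule `N` of a finitely generated module `M`, then `pᵢ^{rᵢ} ≠ pᵢ^{rᵢ−1}` for all `i`. -/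
theorem pow_ne_pow_pred_of_gpif_prod {R : Type*} [CommRing R] [IsNoetherianRing R]
    {M : Type*} [AddCommGroup M] [Module R M] [Module.Finite R M]
    {n : ℕ} (p : Fin n → Ideal R) (hprime : ∀ i, (p i).IsPrime)
    (hdist : Function.Injective p) (r : Fin n → ℕ) (hr : ∀ i, 0 < r i)
    (N : Submodule R M) (hN : N ≠ ⊤)
    (h : HasGPIF N ⊤ (∑ i, Multiset.replicate (r i) (p i))) :
    ∀ i, p i ^ r i ≠ p i ^ (r i - 1) :=
  pow_ne_pow_pred_of_gpif_prod_general p r hr N h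
end

section
/- Let R be a commutative Noetherian ring, N ⊆ M and N′ ⊆ M′ submodules of finitely generated R-modules, p a prime ideal with p ∉ Ass_R(M′/N′) and p a maximal element of Ass_R(M/N) ∪ Ass_R(M′/N′). If N ⊂^{p} K is a regular p-prime extension in M, then N ⊕ N′ ⊂^{p} K ⊕ N′ is a regular p-prime extension in M ⊕ M′. -/
variable {R : Type*} [CommRing R] {M : Type*} [AddCommGroup M] [Module R M]

/-!
By maximality of `p`, no associated prime of `M'/N'` contains `p`, so `N'` is `p`-saturated
in `M'`: `p • y ⊆ N'` forces `y ∈ N'`. Hence a `p`-prime extension `L` of `N ⊕ N'`, being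
killed by `p` modulo `N ⊕ N'`, has all its second coordinates in `N'` and splits as `L₁ ⊕ N'`
with `L₁` a `p`-prime extension of `N`; so maximality of `K` over `N` transfers to `K ⊕ N'`
over `N ⊕ N'`. Regularity comes from `Ass((M ⊕ M')/(N ⊕ N')) = Ass(M/N) ∪ Ass(M'/N')`.
-/

open Submodule

section ProdConstRight

variable {M' : Type*} [AddCommGroup M'] [Module R M']
  {N K : Submodule R M} {N' : Submodule R M'} {p : Ideal R}

lemma Submodule.prod_le_prod_const_right_iff : N.prod N' ≤ K.prod N' ↔ N ≤ K :=
  ⟨fun h x hx => (h (show (x, (0 : M')) ∈ N.prod N' from ⟨hx, N'.zero_mem⟩)).1,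
    fun h => prod_mono h le_rfl⟩

lemma Submodule.prod_lt_prod_const_right_iff : N.prod N' < K.prod N' ↔ N < K := by
  simp only [lt_iff_le_not_ge, prod_le_prod_const_right_iff]

lemma Submodule.colon_prod_const_right : (N.prod N').colon (K.prod N') = N.colon K := by
  ext a
  simp only [mem_colon]
  refine ⟨fun ha x hx => (ha (x, 0) ⟨hx, N'.zero_mem⟩).1, fun ha z hz => ?_⟩
  exact ⟨ha z.1 hz.1, N'.smul_mem a hz.2⟩

lemma isPrimeExt_prod_const_right_iff :
    IsPrimeExt p (N.prod N') (K.prod N') ↔ IsPrimeExt p N K := by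
  rw [IsPrimeExt, IsPrimeExt, prod_lt_prod_const_right_iff, colon_prod_const_right]
  refine and_congr_right fun _ => and_congr_right fun _ => ⟨fun h a x hx hax => ?_, ?_⟩
  · exact (h a (x, 0) ⟨hx, N'.zero_mem⟩ ⟨hax, by simp⟩).imp_left And.left
  · rintro h a z hz haz
    exact (h a z.1 hz.1 haz.1).imp_left fun hz₁ => ⟨hz₁, hz.2⟩

lemma colonSubmodule_eq_self_of_forall_not_le [IsNoetherianRing R]
    (hp : ∀ P ∈ associatedPrimes R (M' ⧸ N'), ¬ p ≤ P) : colonSubmodule N' p = N' := by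
  refine le_antisymm (fun y hy => ?_) fun y hy a _ => N'.smul_mem a hy
  by_contra hyN'
  obtain ⟨P, hP, hle⟩ := exists_le_isAssociatedPrime_of_isNoetherianRing R (N'.mkQ y)
    (by simpa [Submodule.Quotient.mk_eq_zero] using hyN')
  refine hp P hP (le_trans (fun a ha => ?_) hle)
  simpa [mem_colon_singleton, ← Submodule.Quotient.mk_smul, Submodule.Quotient.mk_eq_zero]
    using hy a ha

lemma Submodule.eq_prod_map_fst_of_colon_eq {L : Submodule R (M × M')}
    (hsat : colonSubmodule N' p = N') (hcol : (N.prod N').colon L = p) (hle : N.prod N' ≤ L) :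
    L = (L.map (LinearMap.fst R M M')).prod N' := by
  have hsnd : ∀ z ∈ L, z.2 ∈ N' := fun z hz => hsat ▸ fun a ha =>
    (show a • z ∈ N.prod N' from mem_colon.mp (hcol ▸ ha) z hz).2
  refine le_antisymm (fun z hz => ⟨⟨z, hz, rfl⟩, hsnd z hz⟩) ?_
  rintro ⟨x, y⟩ ⟨⟨w, hw, rfl⟩, hy⟩
  have h0 : ((0 : M), y - w.2) ∈ L := hle ⟨N.zero_mem, N'.sub_mem hy (hsnd w hw)⟩
  convert L.add_mem hw h0 using 1
  ext <;> simp

lemma isMaximalPrimeExtIn_prod_const_right (hsat : colonSubmodule N' p = N')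
    (h : IsMaximalPrimeExtIn ⊤ p N K) :
    IsMaximalPrimeExtIn ⊤ p (N.prod N') (K.prod N') := by
  obtain ⟨-, hK, hKmax⟩ := h
  refine ⟨le_top, isPrimeExt_prod_const_right_iff.2 hK, fun L _ hL hKL => ?_⟩
  have hL₁ := eq_prod_map_fst_of_colon_eq hsat hL.2.1 hL.1.le
  set L₁ := L.map (LinearMap.fst R M M')
  rw [hL₁] at hL hKL
  exact hKmax L₁ le_top (isPrimeExt_prod_const_right_iff.1 hL)
    (prod_lt_prod_const_right_iff.1 hKL)

lemma assOf_top (N : Submodule R M) : assOf R N ⊤ = associatedPrimes R (M ⧸ N) :=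
  LinearEquiv.AssociatedPrimes.eq <|
    (LinearEquiv.ofEq _ _ (by rw [Submodule.map_top, range_mkQ])).trans topEquiv

noncomputable def Submodule.quotientProdEquiv (N : Submodule R M) (N' : Submodule R M') :
    ((M × M') ⧸ N.prod N') ≃ₗ[R] (M ⧸ N) × (M' ⧸ N') :=
  (quotEquivOfEq _ _ (by rw [LinearMap.ker_prodMap, ker_mkQ, ker_mkQ])).symm.trans <|
    (N.mkQ.prodMap N'.mkQ).quotKerEquivOfSurjective
      (Prod.map_surjective.mpr ⟨N.mkQ_surjective, N'.mkQ_surjective⟩)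

lemma associatedPrimes_quotient_prod (N : Submodule R M) (N' : Submodule R M') :
    associatedPrimes R ((M × M') ⧸ N.prod N') =
      associatedPrimes R (M ⧸ N) ∪ associatedPrimes R (M' ⧸ N') := by
  rw [LinearEquiv.AssociatedPrimes.eq (quotientProdEquiv N N'), associatedPrimes.prod]

end ProdConstRight

theorem regular_prime_ext_prod_right_const_general {R : Type*} [CommRing R] [IsNoetherianRing R]
    {M : Type*} [AddCommGroup M] [Module R M]
    {M' : Type*} [AddCommGroup M'] [Module R M']
    (p : Ideal R)
    (N K : Submodule R M) (N' : Submodule R M')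
    (hnot : p ∉ associatedPrimes R (M' ⧸ N'))
    (hmax : Maximal (· ∈ associatedPrimes R (M ⧸ N) ∪ associatedPrimes R (M' ⧸ N')) p)
    (h : IsRegularPrimeExtIn ⊤ p N K) :
    IsRegularPrimeExtIn ⊤ p (N.prod N') (K.prod N') := by
  have hsat : colonSubmodule N' p = N' := colonSubmodule_eq_self_of_forall_not_le
    fun P hP hpP => hnot (le_antisymm (hmax.2 (Or.inr hP) hpP) hpP ▸ hP)
  refine ⟨isMaximalPrimeExtIn_prod_const_right hsat h.1, ?_⟩
  rwa [assOf_top, associatedPrimes_quotient_prod]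

/-- If `p ∉ Ass (M'/N')`, `p` is a maximal element of `Ass (M/N) ∪ Ass (M'/N')`, and
`N ⊂^p K` is a regular `p`-prime extension in `M`, then `N ⊕ N' ⊂^p K ⊕ N'` is a
regular `p`-prime extension in `M ⊕ M'`. -/
theorem regular_prime_ext_prod_right_const {R : Type*} [CommRing R] [IsNoetherianRing R]
    {M : Type*} [AddCommGroup M] [Module R M] [Module.Finite R M]
    {M' : Type*} [AddCommGroup M'] [Module R M'] [Module.Finite R M']
    (p : Ideal R) (hp : p.IsPrime)
    (N K : Submodule R M) (N' : Submodule R M')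
    (hnot : p ∉ associatedPrimes R (M' ⧸ N'))
    (hmax : Maximal (· ∈ associatedPrimes R (M ⧸ N) ∪ associatedPrimes R (M' ⧸ N')) p)
    (h : IsRegularPrimeExtIn ⊤ p N K) :
    IsRegularPrimeExtIn ⊤ p (N.prod N') (K.prod N') :=
  regular_prime_ext_prod_right_const_general p N K N' hnot hmax h
end
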